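/- In the power automaton of A_d(B), for any subset {i_1,...,i_s} ⊆ {1,...,k}, the shortest path from Q_0 = {q_0^{i_1},...,q_0^{i_s}} to Q_{d^s−1} = {q_{d-1}^{i_1},...,q_{d-1}^{i_s}} has length exactly d^s − 1. -/

import Mathlib

/-- Alphabet of `A_d(B)`: letter `a`, letters `b_i`, and the letters `c_l` of `B`
(indexed by naturals). -/
inductive LB | a | b (i : ℕ) | c (l : ℕ)
deriving DecidableEq

/-- Partial transition function of `A_d(B)` built from an automaton `B` with
states `{1,…,k}` and (partial) transition `γ`; the state `q_j^i` of `A_d(B)` is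
encoded as `(i, j)` with `1 ≤ i ≤ k`, `0 ≤ j ≤ d-1`. -/
def δAB (d k : ℕ) (γ : ℕ → ℕ → Option ℕ) : ℕ × ℕ → LB → Option (ℕ × ℕ) := fun p x =>
  if ¬(1 ≤ p.1 ∧ p.1 ≤ k ∧ p.2 < d) then none else
  match x with
  | LB.a => some (p.1, 0)
  | LB.b l =>
      if ¬(1 ≤ l ∧ l ≤ k) then none
      else if p.1 = l then (if p.2 + 1 < d then some (p.1, p.2 + 1) else none)
      else if l < p.1 then some (p.1, p.2)
      else if p.2 = d - 1 then some (p.1, 0) else none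
  | LB.c l =>
      if p.2 = d - 1 then (γ p.1 l).map (fun j => (j, 0)) else none

/-- Extension of a partial transition function to words. -/
def run {Q A : Type*} (δ : Q → A → Option Q) : Q → List A → Option Q
  | q, [] => some q
  | q, x :: xs => (δ q x).bind (fun q' => run δ q' xs)

/-- One step of the power automaton. -/
def stepSet {Q A : Type*} [DecidableEq Q] (δ : Q → A → Option Q)
    (S : Finset Q) (x : A) : Option (Finset Q) :=
  if ∀ q ∈ S, (δ q x).isSome then some (S.biUnion fun q => (δ q x).toFinset)
  else none

/-- Run of the power automaton on a word. -/
def runSet {Q A : Type*} [DecidableEq Q] (δ : Q → A → Option Q)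
    (S : Finset Q) (w : List A) : Option (Finset Q) :=
  List.foldlM (stepSet δ) S w

/-! A set of states `q_j^i` with pairwise distinct `i` is a `d`-ary counter whose digits are the
`j`'s, ordered by `i`. Every letter preserves this shape and raises the value of the counter by at
most one: `a` and `c_l` reset all digits to `0`, and `b_l` carries through digits `d - 1` below
position `l`. The value is `0` at `Q_0` and `d ^ s - 1` at `Q_{d^s-1}`, whence the lower bound.
Conversely, the letters `b_i` count through every value: if `w` counts on the indices below the
largest one `M`, then `w (b_M w)^(d-1)` counts on all of them, in `d ^ s - 1` letters. -/

section PowerAutomaton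

variable {Q A : Type*} [DecidableEq Q] {δ : Q → A → Option Q}

@[simp]
lemma runSet_nil (S : Finset Q) : runSet δ S [] = some S := rfl

@[simp]
lemma runSet_cons (S : Finset Q) (x : A) (w : List A) :
    runSet δ S (x :: w) = (stepSet δ S x).bind (runSet δ · w) := rfl

lemma runSet_append (S : Finset Q) (u v : List A) :
    runSet δ S (u ++ v) = (runSet δ S u).bind (runSet δ · v) := by
  simp [runSet, List.foldlM_append]

lemma stepSet_eq_some_iff {S T : Finset Q} {x : A} :
    stepSet δ S x = some T ↔
      ∃ g : Q → Q, (∀ p ∈ S, δ p x = some (g p)) ∧ S.image g = T := by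
  constructor
  · intro h
    unfold stepSet at h
    split_ifs at h with hS
    refine ⟨fun p => (δ p x).getD p, fun p hp => ?_, ?_⟩
    · obtain ⟨q, hq⟩ := Option.isSome_iff_exists.mp (hS p hp)
      simp [hq]
    · rw [← Option.some_inj.mp h]
      ext q
      simp only [Finset.mem_image, Finset.mem_biUnion, Option.mem_toFinset, Option.mem_def]
      refine exists_congr fun p => and_congr_right fun hp => ?_
      obtain ⟨r, hr⟩ := Option.isSome_iff_exists.mp (hS p hp)
      simp [hr]
  · rintro ⟨g, hg, rfl⟩
    rw [stepSet, if_pos fun p hp => by simp [hg p hp]]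
    congr 1
    ext q
    simp only [Finset.mem_image, Finset.mem_biUnion, Option.mem_toFinset, Option.mem_def]
    exact exists_congr fun p => and_congr_right fun hp => by simp [hg p hp]

lemma stepSet_insert {S T : Finset Q} {x : A} {p q : Q}
    (h : stepSet δ S x = some T) (hp : δ p x = some q) :
    stepSet δ (insert p S) x = some (insert q T) := by
  obtain ⟨g, hg, rfl⟩ := stepSet_eq_some_iff.mp h
  refine stepSet_eq_some_iff.mpr ⟨Function.update g p q, fun r hr => ?_, ?_⟩
  · by_cases hrp : r = p
    · subst hrp; simpa using hp
    · simpa [hrp] using hg r (Finset.mem_of_mem_insert_of_ne hr hrp)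
  · rw [Finset.image_insert, Function.update_self]
    congr 1
    refine Finset.image_congr fun r hr => ?_
    by_cases hrp : r = p
    · subst hrp
      simpa [hp] using hg r hr
    · simp [hrp]

lemma runSet_insert_of_forall_eq_self {S T : Finset Q} {w : List A} {p : Q}
    (hp : ∀ x ∈ w, δ p x = some p) (h : runSet δ S w = some T) :
    runSet δ (insert p S) w = some (insert p T) := by
  induction w generalizing S with
  | nil => simp_all
  | cons x w ih =>
    simp only [runSet_cons, Option.bind_eq_some_iff] at h ⊢
    obtain ⟨S', hS', hrun⟩ := h
    exact ⟨insert p S', stepSet_insert hS' (hp x (by simp)),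
      ih (fun y hy => hp y (by simp [hy])) hrun⟩

lemma le_add_length_of_runSet {P : Finset Q → Prop} {φ : Finset Q → ℕ}
    (hstep : ∀ S T x, P S → stepSet δ S x = some T → P T ∧ φ T ≤ φ S + 1)
    {S T : Finset Q} {w : List A} (hS : P S) (h : runSet δ S w = some T) :
    φ T ≤ φ S + w.length := by
  induction w generalizing S with
  | nil => simp_all
  | cons x w ih =>
    simp only [runSet_cons, Option.bind_eq_some_iff] at h
    obtain ⟨S', hS', hrun⟩ := h
    obtain ⟨hP, hφ⟩ := hstep S S' x hS hS'
    have := ih hP hrun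
    simp only [List.length_cons]
    omega

end PowerAutomaton

section Counter

open Finset

/-- A set of states `q_j^i` with pairwise distinct `i` read as a number in base `d`: the digit
in position `r` is the `j` of the state with the `r`-th smallest `i`. -/
def counterValue (d : ℕ) (S : Finset (ℕ × ℕ)) : ℕ :=
  ∑ p ∈ S, p.2 * d ^ #{i ∈ S.image Prod.fst | i < p.1}

lemma sum_pred_mul_pow_card_filter_lt (d : ℕ) (J : Finset ℕ) :
    ∑ i ∈ J, (d - 1) * d ^ #{j ∈ J | j < i} = d ^ #J - 1 := by
  induction J using Finset.induction_on_max with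
  | empty => simp
  | insert M J hlt ih =>
    have hM : M ∉ J := fun h => (hlt M h).false
    have hfilter : ∀ i ∈ J, {j ∈ insert M J | j < i} = {j ∈ J | j < i} := fun i hi => by
      rw [filter_insert, if_neg (hlt i hi).not_gt]
    have hall : {j ∈ J | j < M} = J := filter_true_of_mem hlt
    rw [sum_insert hM, sum_congr rfl fun i hi => by rw [hfilter i hi], ih, filter_insert,
      if_neg (lt_irrefl M), hall, card_insert_of_notMem hM, pow_succ]
    cases d with
    | zero => cases #J <;> simp
    | succ d =>
      have := Nat.one_le_pow #J (d + 1) d.succ_pos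
      rw [Nat.add_sub_cancel, mul_add_one, mul_comm d]
      omega

lemma sum_filter_lt_pred_mul_pow_card_filter_lt (d l : ℕ) (J : Finset ℕ) :
    ∑ i ∈ J with i < l, (d - 1) * d ^ #{j ∈ J | j < i} = d ^ #{j ∈ J | j < l} - 1 := by
  rw [← sum_pred_mul_pow_card_filter_lt]
  refine sum_congr rfl fun i hi => ?_
  have hil := (mem_filter.mp hi).2
  rw [filter_filter, filter_congr fun j _ => ⟨fun h => ⟨h.trans hil, h⟩, And.right⟩]

lemma counterValue_image_pair (d v : ℕ) (I : Finset ℕ) :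
    counterValue d (I.image fun i => (i, v)) = ∑ i ∈ I, v * d ^ #{j ∈ I | j < i} := by
  rw [counterValue, image_image, sum_image fun _ _ _ _ h => (Prod.mk.inj h).1]
  simp [Function.comp_def]

/-- `δAB` at the letter `b l`, where it is defined. -/
def bStep (l : ℕ) (p : ℕ × ℕ) : ℕ × ℕ :=
  if p.1 = l then (p.1, p.2 + 1) else if l < p.1 then p else (p.1, 0)

@[simp]
lemma fst_bStep (l : ℕ) (p : ℕ × ℕ) : (bStep l p).1 = p.1 := by
  unfold bStep; split_ifs <;> rfl

/-- Raising the digit at `l` adds `d ^ r`, for `r` the position of `l`, and turning the digits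
`d - 1` below it into `0` subtracts `d ^ r - 1`. -/
lemma counterValue_image_bStep_le {d l : ℕ} {S : Finset (ℕ × ℕ)}
    (hinj : Set.InjOn Prod.fst (S : Set (ℕ × ℕ))) (hfull : ∀ p ∈ S, p.1 < l → p.2 = d - 1) :
    counterValue d (S.image (bStep l)) ≤ counterValue d S + 1 := by
  set J := S.image Prod.fst
  set w : ℕ → ℕ := fun i => d ^ #{j ∈ J | j < i}
  have hT : counterValue d (S.image (bStep l)) = ∑ p ∈ S, (bStep l p).2 * w p.1 := by
    have hJ : (S.image (bStep l)).image Prod.fst = J := by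
      rw [image_image]; exact image_congr fun p _ => fst_bStep l p
    rw [counterValue, hJ,
      sum_image fun p hp q hq h => hinj hp hq (by simpa using congrArg Prod.fst h)]
    simp [w]
  have hterm : ∀ p ∈ S, (bStep l p).2 * w p.1 + (if p.1 < l then (d - 1) * w p.1 else 0)
      ≤ p.2 * w p.1 + (if p.1 = l then w l else 0) := fun p hp => by
    rcases lt_trichotomy p.1 l with h | rfl | h
    · simp [bStep, h, h.ne, h.not_gt, hfull p hp h]
    · simp [bStep, add_mul]
    · simp [bStep, h.ne', h, h.not_gt]
  have hbelow : ∑ p ∈ S, (if p.1 < l then (d - 1) * w p.1 else 0) = w l - 1 := by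
    rw [← sum_filter, ← sum_image (f := fun i => (d - 1) * w i)
      fun p hp q hq h => hinj (mem_filter.mp hp).1 (mem_filter.mp hq).1 h]
    have himage : {p ∈ S | p.1 < l}.image Prod.fst = {i ∈ J | i < l} := by
      ext i; simp [J, and_assoc]
    rw [himage, sum_filter_lt_pred_mul_pow_card_filter_lt]
  have hat : ∑ p ∈ S, (if p.1 = l then w l else 0) ≤ w l := by
    rw [← sum_filter, sum_const, smul_eq_mul]
    refine mul_le_of_le_one_left (Nat.zero_le _) (card_le_one.mpr fun p hp q hq => ?_)
    rw [mem_filter] at hp hq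
    exact hinj hp.1 hq.1 (hp.2.trans hq.2.symm)
  have := sum_le_sum hterm
  rw [sum_add_distrib, sum_add_distrib, hbelow] at this
  have hS : counterValue d S = ∑ p ∈ S, p.2 * w p.1 := rfl
  rw [hT, hS]
  omega

end Counter

section Transitions

variable {d k : ℕ} {γ : ℕ → ℕ → Option ℕ}

lemma δAB_b_eq_some_iff {p q : ℕ × ℕ} {l : ℕ} :
    δAB d k γ p (LB.b l) = some q ↔
      (1 ≤ p.1 ∧ p.1 ≤ k ∧ p.2 < d) ∧ (1 ≤ l ∧ l ≤ k) ∧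
        (p.1 = l → p.2 + 1 < d) ∧ (p.1 < l → p.2 = d - 1) ∧ bStep l p = q := by
  obtain ⟨i, j⟩ := p
  unfold δAB bStep
  simp only
  split_ifs <;> grind

lemma snd_eq_zero_of_δAB {p q : ℕ × ℕ} {x : LB} (hx : ∀ l, x ≠ LB.b l)
    (h : δAB d k γ p x = some q) : q.2 = 0 := by
  cases x with
  | a => simp only [δAB] at h; split_ifs at h; cases h; rfl
  | b l => exact absurd rfl (hx l)
  | c l =>
    simp only [δAB] at h
    split_ifs at h
    obtain ⟨j, -, rfl⟩ := Option.map_eq_some_iff.mp h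
    rfl

lemma injOn_fst_and_counterValue_stepSet_le {S T : Finset (ℕ × ℕ)} {x : LB}
    (hinj : Set.InjOn Prod.fst (S : Set (ℕ × ℕ))) (h : stepSet (δAB d k γ) S x = some T) :
    Set.InjOn Prod.fst (T : Set (ℕ × ℕ)) ∧ counterValue d T ≤ counterValue d S + 1 := by
  obtain ⟨g, hg, rfl⟩ := stepSet_eq_some_iff.mp h
  by_cases hx : ∃ l, x = LB.b l
  · obtain ⟨l, rfl⟩ := hx
    have hb : ∀ p ∈ S, (p.1 < l → p.2 = d - 1) ∧ bStep l p = g p := fun p hp =>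
      (δAB_b_eq_some_iff.mp (hg p hp)).2.2.2
    rw [← Finset.image_congr fun p hp => (hb p hp).2]
    refine ⟨?_, counterValue_image_bStep_le hinj fun p hp => (hb p hp).1⟩
    simp only [Finset.coe_image]
    rintro _ ⟨p, hp, rfl⟩ _ ⟨q, hq, rfl⟩ h
    simp only [fst_bStep] at h
    rw [hinj hp hq h]
  · push Not at hx
    have hzero : ∀ q ∈ S.image g, q.2 = 0 := by
      simp only [Finset.mem_image]
      rintro _ ⟨p, hp, rfl⟩
      exact snd_eq_zero_of_δAB hx (hg p hp)
    refine ⟨fun p hp q hq h => Prod.ext h ?_, ?_⟩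
    · rw [hzero p hp, hzero q hq]
    · rw [counterValue, Finset.sum_eq_zero fun p hp => by rw [hzero p hp, zero_mul]]
      omega

end Transitions

section UpperBound

open Finset

variable {d k : ℕ} {γ : ℕ → ℕ → Option ℕ} {M : ℕ} {I : Finset ℕ}

lemma stepSet_b_carry (hM : 1 ≤ M ∧ M ≤ k) (hI : ∀ i ∈ I, 1 ≤ i ∧ i < M) {j : ℕ}
    (hj : j + 1 < d) :
    stepSet (δAB d k γ) (insert (M, j) (I.image fun i => (i, d - 1))) (LB.b M) =
      some (insert (M, j + 1) (I.image fun i => (i, 0))) := by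
  refine stepSet_eq_some_iff.mpr ⟨bStep M, fun p hp => δAB_b_eq_some_iff.mpr ?_, ?_⟩
  · simp only [mem_insert, mem_image] at hp
    rcases hp with rfl | ⟨i, hi, rfl⟩
    · exact ⟨⟨hM.1, hM.2, by omega⟩, hM, fun _ => hj, by omega, rfl⟩
    · have := hI i hi
      exact ⟨⟨this.1, by omega, by omega⟩, hM, by omega, fun _ => rfl, rfl⟩
  · rw [image_insert, image_image]
    congr 1
    · simp [bStep]
    · exact image_congr fun i hi => by
        simp [bStep, (hI i hi).2.ne, (hI i hi).2.not_gt]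

lemma runSet_counting_loop (hM : 1 ≤ M ∧ M ≤ k) (hI : ∀ i ∈ I, 1 ≤ i ∧ i < M)
    {w : List LB} (hw : ∀ x ∈ w, ∃ l ∈ I, x = LB.b l)
    (hrun : runSet (δAB d k γ) (I.image fun i => (i, 0)) w = some (I.image fun i => (i, d - 1)))
    {j : ℕ} (hj : j < d) :
    runSet (δAB d k γ) (insert (M, 0) (I.image fun i => (i, 0)))
        (w ++ (List.replicate j (LB.b M :: w)).flatten) =
      some (insert (M, j) (I.image fun i => (i, d - 1))) := by
  have hfixed : ∀ j < d, ∀ x ∈ w, δAB d k γ (M, j) x = some (M, j) := by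
    intro j hj x hx
    obtain ⟨l, hl, rfl⟩ := hw x hx
    have := hI l hl
    exact δAB_b_eq_some_iff.mpr
      ⟨⟨hM.1, hM.2, hj⟩, ⟨this.1, by omega⟩, by omega, by omega,
        by simp [bStep, this.2.ne', this.2.not_ge]⟩
  induction j with
  | zero => simpa using runSet_insert_of_forall_eq_self (hfixed 0 hj) hrun
  | succ j ih =>
    rw [List.replicate_succ', List.flatten_append, ← List.append_assoc, runSet_append,
      ih (by omega), Option.bind_some, List.flatten_singleton, runSet_cons,
      stepSet_b_carry hM hI hj, Option.bind_some]
    exact runSet_insert_of_forall_eq_self (hfixed (j + 1) hj) hrun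

lemma exists_counting_word (hd : 0 < d) (I : Finset ℕ) (hI : I ⊆ Icc 1 k) :
    ∃ w : List LB, w.length = d ^ #I - 1 ∧ (∀ x ∈ w, ∃ l ∈ I, x = LB.b l) ∧
      runSet (δAB d k γ) (I.image fun i => (i, 0)) w = some (I.image fun i => (i, d - 1)) := by
  induction I using Finset.induction_on_max with
  | empty => exact ⟨[], by simp, by simp, by simp⟩
  | insert M I hlt ih =>
    have hM : M ∉ I := fun h => (hlt M h).false
    have hMk : 1 ≤ M ∧ M ≤ k := mem_Icc.mp (hI (mem_insert_self M I))
    have hIM : ∀ i ∈ I, 1 ≤ i ∧ i < M := fun i hi =>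
      ⟨(mem_Icc.mp (hI (mem_insert_of_mem hi))).1, hlt i hi⟩
    obtain ⟨w, hlen, hw, hrun⟩ := ih ((subset_insert M I).trans hI)
    refine ⟨w ++ (List.replicate (d - 1) (LB.b M :: w)).flatten, ?_, ?_, ?_⟩
    · have := Nat.one_le_pow #I d hd
      simp only [List.length_append, List.length_flatten, List.map_replicate, List.sum_replicate,
        List.length_cons, smul_eq_mul, hlen, card_insert_of_notMem hM, pow_succ]
      rw [Nat.sub_add_cancel this]
      cases d with
      | zero => omega
      | succ e => rw [Nat.add_sub_cancel, mul_add_one, mul_comm e]; omega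
    · intro x hx
      obtain rfl | hx : x = LB.b M ∨ x ∈ w := by
        simp only [List.mem_append, List.mem_flatten, List.mem_replicate] at hx
        rcases hx with hx | ⟨_, ⟨-, rfl⟩, hx⟩
        exacts [Or.inr hx, List.mem_cons.mp hx]
      · exact ⟨M, mem_insert_self M I, rfl⟩
      · obtain ⟨l, hl, rfl⟩ := hw x hx
        exact ⟨l, mem_insert_of_mem hl, rfl⟩
    · rw [image_insert, image_insert]
      exact runSet_counting_loop hMk hIM hw hrun (by omega)

end UpperBound

theorem shortest_path_in_power_of_AdB_general (d k : ℕ) (hd : 1 < d)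
    (γ : ℕ → ℕ → Option ℕ)
    (I : Finset ℕ) (hI : I ⊆ Finset.Icc 1 k) :
    (∃ w : List LB, w.length = d ^ I.card - 1 ∧
        runSet (δAB d k γ) (I.image fun i => (i, 0)) w =
          some (I.image fun i => (i, d - 1))) ∧
    (∀ w : List LB,
        runSet (δAB d k γ) (I.image fun i => (i, 0)) w =
          some (I.image fun i => (i, d - 1)) →
        d ^ I.card - 1 ≤ w.length) := by
  refine ⟨?_, fun w hw => ?_⟩
  · obtain ⟨w, hlen, -, hrun⟩ := exists_counting_word (γ := γ) (Nat.zero_lt_of_lt hd) I hI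
    exact ⟨w, hlen, hrun⟩
  · have hinj : Set.InjOn Prod.fst ((I.image fun i => (i, 0)) : Set (ℕ × ℕ)) := by
      simp [Set.InjOn]
    have := le_add_length_of_runSet (φ := counterValue d)
      (fun _ _ _ => injOn_fst_and_counterValue_stepSet_le) hinj hw
    rwa [counterValue_image_pair, counterValue_image_pair, sum_pred_mul_pow_card_filter_lt,
      Finset.sum_eq_zero fun _ _ => zero_mul _, zero_add] at this

/-- Lemma 4: in the power automaton of `A_d(B)`, for any subset
`I = {i_1,…,i_s} ⊆ {1,…,k}`, the shortest path from `{q_0^{i_1},…,q_0^{i_s}}` to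
`{q_{d-1}^{i_1},…,q_{d-1}^{i_s}}` has length exactly `d^s − 1`. -/
theorem shortest_path_in_power_of_AdB (d k : ℕ) (hd : 1 < d)
    (γ : ℕ → ℕ → Option ℕ) (hγ : ∀ i l j, γ i l = some j → 1 ≤ j ∧ j ≤ k)
    (I : Finset ℕ) (hI : I ⊆ Finset.Icc 1 k) (hne : I.Nonempty) :
    (∃ w : List LB, w.length = d ^ I.card - 1 ∧
        runSet (δAB d k γ) (I.image fun i => (i, 0)) w =
          some (I.image fun i => (i, d - 1))) ∧
    (∀ w : List LB,
        runSet (δAB d k γ) (I.image fun i => (i, 0)) w =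
          some (I.image fun i => (i, d - 1)) →
        d ^ I.card - 1 ≤ w.length) :=
  shortest_path_in_power_of_AdB_general d k hd γ I hI
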